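/- Let (Ω, P) be a finite probability space carrying random variables S : Ω → {0,1}, Y : Ω → {0,1} with P(S=s, Y=0) > 0 for s ∈ {0,1}, and X : Ω → α with α finite, and let c : α → {0,1} be any classifier. Let q_s(x) = P(X = x | S = s, Y = 0), p_s = P(c(X) = 1 | S = s, Y = 0), and FPR = P(c(X) = 1 | Y = 0). Then FPR ≤ (p₀ + p₁)/2 + ½·√(2·JS(q₀, q₁)). -/

import Mathlib

/-!
Writing `m = (p + q) / 2` and `p = m (1 + u)`, `q = m (1 - u)`, the Jensen–Shannon summand
`p log (p / m) + q log (q / m)` equals `m ((1 + u) log (1 + u) + (1 - u) log (1 - u)) ≥ m u²`,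
so `JS(q₀, q₁)` dominates a quarter of the triangular discrimination `∑ (q₀ - q₁)² / (q₀ + q₁)`.
Cauchy–Schwarz bounds the squared `ℓ¹` distance by twice the triangular discrimination, and the
`ℓ¹` distance bounds `2 |p₀ - p₁|`; hence `|p₀ - p₁| ≤ √(2 JS(q₀, q₁))`. Finally the FPR is a
weighted average of `p₀` and `p₁`, so it is at most `max p₀ p₁ = (p₀ + p₁) / 2 + |p₀ - p₁| / 2`.
-/

open Finset

open Classical in
/-- Probability of an event on a finite probability space given by a weight function `P`. -/
noncomputable def pr {Ω : Type*} [Fintype Ω] (P : Ω → ℝ) (E : Ω → Prop) : ℝ :=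
  ∑ ω, if E ω then P ω else 0

open Classical in
/-- Kullback–Leibler divergence of finitely supported pmfs (natural logarithm),
restricted to the support of `p`. -/
noncomputable def KL {α : Type*} [Fintype α] (p q : α → ℝ) : ℝ :=
  ∑ x, if 0 < p x then p x * Real.log (p x / q x) else 0

/-- Jensen–Shannon divergence of finitely supported pmfs. -/
noncomputable def JS {α : Type*} [Fintype α] (p q : α → ℝ) : ℝ :=
  KL p (fun x => (p x + q x) / 2) / 2 + KL q (fun x => (p x + q x) / 2) / 2

open Real

theorem sq_le_one_add_mul_log_add_one_sub_mul_log_of_nonneg {u : ℝ} (hu₀ : 0 ≤ u) (hu₁ : u ≤ 1) :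
    u ^ 2 ≤ (1 + u) * log (1 + u) + (1 - u) * log (1 - u) := by
  set f : ℝ → ℝ := fun u => (1 + u) * log (1 + u) + (1 - u) * log (1 - u) - u ^ 2
  have hf_cont : ContinuousOn f (Set.Icc 0 1) := by
    have := continuous_mul_log
    exact Continuous.continuousOn (by fun_prop)
  have hf_deriv : ∀ u ∈ Set.Ioo (0 : ℝ) 1, HasDerivAt f (log (1 + u) - log (1 - u) - 2 * u) u := by
    intro u ⟨hu₀, hu₁⟩
    have hp := (hasDerivAt_id' u).const_add 1
    have hm := (hasDerivAt_id' u).const_sub 1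
    refine (((hp.fun_mul (hp.log (by linarith))).fun_add (hm.fun_mul (hm.log (by linarith)))).fun_sub
      (hasDerivAt_pow 2 u)).congr_deriv ?_
    field_simp
    ring
  have hf_mono : MonotoneOn f (Set.Icc 0 1) := by
    refine monotoneOn_of_deriv_nonneg (convex_Icc 0 1) hf_cont ?_ ?_ <;> rw [interior_Icc]
    · exact fun u hu => (hf_deriv u hu).differentiableAt.differentiableWithinAt
    · intro u hu
      rw [(hf_deriv u hu).deriv, sub_nonneg]
      obtain ⟨hu₀, hu₁⟩ := hu
      -- the first term of the series `log (1 + u) - log (1 - u) = ∑ 2 u ^ (2k + 1) / (2k + 1)`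
      simpa using le_hasSum (hasSum_log_sub_log_of_abs_lt_one (abs_lt.mpr ⟨by linarith, hu₁⟩)) 0
        fun k _ => by positivity
  have := hf_mono ⟨le_rfl, zero_le_one⟩ ⟨hu₀, hu₁⟩ hu₀
  simp only [f] at this
  norm_num at this
  linarith

theorem sq_le_one_add_mul_log_add_one_sub_mul_log {u : ℝ} (hu : |u| ≤ 1) :
    u ^ 2 ≤ (1 + u) * log (1 + u) + (1 - u) * log (1 - u) := by
  obtain ⟨hu₀, hu₁⟩ := abs_le.mp hu
  rcases le_total 0 u with hu | hu
  · exact sq_le_one_add_mul_log_add_one_sub_mul_log_of_nonneg hu hu₁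
  · have := sq_le_one_add_mul_log_add_one_sub_mul_log_of_nonneg (neg_nonneg.mpr hu) (by linarith)
    rw [neg_sq, ← sub_eq_add_neg, sub_neg_eq_add] at this
    linarith

theorem sq_sub_div_add_le_two_mul_add_mul_log {p q : ℝ} (hp : 0 ≤ p) (hq : 0 ≤ q) :
    (p - q) ^ 2 / (p + q) ≤
      2 * (p * log (p / ((p + q) / 2)) + q * log (q / ((p + q) / 2))) := by
  rcases (add_nonneg hp hq).eq_or_lt with hpq | hpq
  · obtain ⟨rfl, rfl⟩ : p = 0 ∧ q = 0 := ⟨by linarith, by linarith⟩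
    simp
  obtain ⟨u, hu_def⟩ : ∃ u, u = (p - q) / (p + q) := ⟨_, rfl⟩
  have hu : |u| ≤ 1 := by
    rw [hu_def, abs_div, abs_of_pos hpq, div_le_one hpq, abs_le]
    constructor <;> linarith
  have hpq_u : (p + q) * u = p - q := by rw [hu_def, mul_div_cancel₀ _ hpq.ne']
  have hp' : p / ((p + q) / 2) = 1 + u := by rw [div_eq_iff (by positivity)]; linarith
  have hq' : q / ((p + q) / 2) = 1 - u := by rw [div_eq_iff (by positivity)]; linarith
  calc (p - q) ^ 2 / (p + q) = (p + q) * u ^ 2 := by rw [← hpq_u]; field_simp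
    _ ≤ (p + q) * ((1 + u) * log (1 + u) + (1 - u) * log (1 - u)) :=
      mul_le_mul_of_nonneg_left (sq_le_one_add_mul_log_add_one_sub_mul_log hu) hpq.le
    _ = 2 * (p * log (p / ((p + q) / 2)) + q * log (q / ((p + q) / 2))) := by
      rw [hp', hq']
      linear_combination (log (1 + u) - log (1 - u)) * hpq_u

section Divergence

variable {α : Type*} [Fintype α]

theorem KL_eq_sum_mul_log {p : α → ℝ} (hp : ∀ x, 0 ≤ p x) (r : α → ℝ) :
    KL p r = ∑ x, p x * log (p x / r x) := by
  refine sum_congr rfl fun x _ => ?_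
  rcases (hp x).eq_or_lt with hx | hx
  · simp [← hx]
  · simp [hx]

theorem sum_sq_sub_div_add_le_four_mul_JS {p q : α → ℝ} (hp : ∀ x, 0 ≤ p x) (hq : ∀ x, 0 ≤ q x) :
    ∑ x, (p x - q x) ^ 2 / (p x + q x) ≤ 4 * JS p q := by
  have hJS : 4 * JS p q =
      ∑ x, 2 * (p x * log (p x / ((p x + q x) / 2)) + q x * log (q x / ((p x + q x) / 2))) := by
    rw [JS, KL_eq_sum_mul_log hp, KL_eq_sum_mul_log hq, ← mul_sum, sum_add_distrib]
    ring
  rw [hJS]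
  exact sum_le_sum fun x _ => sq_sub_div_add_le_two_mul_add_mul_log (hp x) (hq x)

theorem sq_sum_abs_sub_le {p q : α → ℝ} (hp : ∀ x, 0 ≤ p x) (hq : ∀ x, 0 ≤ q x) :
    (∑ x, |p x - q x|) ^ 2 ≤ (∑ x, (p x - q x) ^ 2 / (p x + q x)) * ∑ x, (p x + q x) := by
  refine sum_sq_le_sum_mul_sum_of_sq_le_mul _ (fun x _ => ?_) (fun x _ => add_nonneg (hp x) (hq x))
    fun x _ => ?_
  · exact div_nonneg (sq_nonneg _) (add_nonneg (hp x) (hq x))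
  · rw [sq_abs]
    rcases (add_nonneg (hp x) (hq x)).eq_or_lt with hx | hx
    · obtain ⟨h₁, h₂⟩ : p x = 0 ∧ q x = 0 := ⟨by linarith [hp x, hq x], by linarith [hp x, hq x]⟩
      simp [h₁, h₂]
    · rw [div_mul_cancel₀ _ hx.ne']

theorem abs_sum_le_sum_abs_div_two (s : Finset α) {d : α → ℝ} (hd : ∑ x, d x = 0) :
    |∑ x ∈ s, d x| ≤ (∑ x, |d x|) / 2 := by
  classical
  have hcompl : ∑ x ∈ s, d x = -∑ x ∈ sᶜ, d x := by linarith [sum_add_sum_compl s d]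
  calc |∑ x ∈ s, d x| = (|∑ x ∈ s, d x| + |∑ x ∈ sᶜ, d x|) / 2 := by
        rw [hcompl, abs_neg]; ring
    _ ≤ (∑ x ∈ s, |d x| + ∑ x ∈ sᶜ, |d x|) / 2 := by
        gcongr <;> exact abs_sum_le_sum_abs _ _
    _ = (∑ x, |d x|) / 2 := by rw [sum_add_sum_compl]

theorem abs_sum_sub_sum_le_sqrt_two_mul_JS (s : Finset α) {p q : α → ℝ}
    (hp : ∀ x, 0 ≤ p x) (hq : ∀ x, 0 ≤ q x) (hp₁ : ∑ x, p x = 1) (hq₁ : ∑ x, q x = 1) :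
    |∑ x ∈ s, p x - ∑ x ∈ s, q x| ≤ √(2 * JS p q) := by
  refine abs_le_sqrt ?_
  have htv : |∑ x ∈ s, (p x - q x)| ≤ (∑ x, |p x - q x|) / 2 :=
    abs_sum_le_sum_abs_div_two s (by rw [sum_sub_distrib, hp₁, hq₁, sub_self])
  have hcs := sq_sum_abs_sub_le hp hq
  rw [sum_add_distrib, hp₁, hq₁] at hcs
  have hJS := sum_sq_sub_div_add_le_four_mul_JS hp hq
  rw [← sum_sub_distrib, ← sq_abs]
  calc |∑ x ∈ s, (p x - q x)| ^ 2 ≤ ((∑ x, |p x - q x|) / 2) ^ 2 :=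
        pow_le_pow_left₀ (abs_nonneg _) htv 2
    _ ≤ 2 * JS p q := by nlinarith

end Divergence

theorem add_div_add_le_max_div {a₀ a₁ b₀ b₁ : ℝ} (hb₀ : 0 < b₀) (hb₁ : 0 < b₁) :
    (a₀ + a₁) / (b₀ + b₁) ≤ max (a₀ / b₀) (a₁ / b₁) := by
  rw [div_le_iff₀ (add_pos hb₀ hb₁), mul_add]
  have h₀ : a₀ ≤ max (a₀ / b₀) (a₁ / b₁) * b₀ := (div_le_iff₀ hb₀).mp (le_max_left _ _)
  have h₁ : a₁ ≤ max (a₀ / b₀) (a₁ / b₁) * b₁ := (div_le_iff₀ hb₁).mp (le_max_right _ _)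
  linarith

section FiniteProbability

variable {Ω : Type*} [Fintype Ω] (P : Ω → ℝ)

theorem pr_nonneg (hP : ∀ ω, 0 ≤ P ω) (E : Ω → Prop) : 0 ≤ pr P E :=
  sum_nonneg fun ω _ => by split_ifs <;> simp [hP ω]

theorem pr_congr {E F : Ω → Prop} (h : ∀ ω, E ω ↔ F ω) : pr P E = pr P F := by
  rw [funext fun ω => propext (h ω)]

theorem pr_eq_pr_and_eq_zero_add_pr_and_eq_one (S : Ω → Fin 2) (E : Ω → Prop) :
    pr P E = pr P (fun ω => S ω = 0 ∧ E ω) + pr P (fun ω => S ω = 1 ∧ E ω) := by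
  classical
  simp only [pr, ← sum_add_distrib]
  refine sum_congr rfl fun ω _ => ?_
  rcases Fin.exists_fin_two.mp ⟨S ω, rfl⟩ with h | h <;> simp [h]

theorem pr_eq_sum_pr_and_eq {α : Type*} [Fintype α] (X : Ω → α) (E : Ω → Prop) :
    pr P E = ∑ x, pr P (fun ω => X ω = x ∧ E ω) := by
  classical
  simp only [pr]
  rw [sum_comm]
  refine sum_congr rfl fun ω _ => ?_
  simp [ite_and, eq_comm]

theorem pr_comp_and_eq_sum_filter {α : Type*} [Fintype α] (X : Ω → α) (B : α → Prop)
    [DecidablePred B] (E : Ω → Prop) :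
    pr P (fun ω => B (X ω) ∧ E ω) = ∑ x ∈ univ.filter B, pr P (fun ω => X ω = x ∧ E ω) := by
  rw [pr_eq_sum_pr_and_eq P X, sum_filter]
  refine sum_congr rfl fun x _ => ?_
  split_ifs with hx
  · exact pr_congr P fun ω => ⟨fun ⟨hX, _, hE⟩ => ⟨hX, hE⟩, fun ⟨hX, hE⟩ => ⟨hX, hX ▸ hx, hE⟩⟩
  · refine (pr_congr P fun ω => iff_false_intro fun ⟨hX, hB, _⟩ => hx (hX ▸ hB)).trans ?_
    simp [pr]

end FiniteProbability

theorem stmt10_general {Ω α : Type*} [Fintype Ω] [Fintype α]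
    (P : Ω → ℝ) (hP0 : ∀ ω, 0 ≤ P ω)
    (S : Ω → Fin 2) (Y : Ω → Fin 2)
    (hSY : ∀ s, 0 < pr P (fun ω => S ω = s ∧ Y ω = 0))
    (X : Ω → α) (c : α → Fin 2) :
    pr P (fun ω => c (X ω) = 1 ∧ Y ω = 0) / pr P (fun ω => Y ω = 0) ≤
      (pr P (fun ω => c (X ω) = 1 ∧ S ω = 0 ∧ Y ω = 0) /
            pr P (fun ω => S ω = 0 ∧ Y ω = 0)
          + pr P (fun ω => c (X ω) = 1 ∧ S ω = 1 ∧ Y ω = 0) /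
            pr P (fun ω => S ω = 1 ∧ Y ω = 0)) / 2
        + 1 / 2 *
          Real.sqrt (2 *
            JS (fun x => pr P (fun ω => X ω = x ∧ S ω = 0 ∧ Y ω = 0) /
                  pr P (fun ω => S ω = 0 ∧ Y ω = 0))
               (fun x => pr P (fun ω => X ω = x ∧ S ω = 1 ∧ Y ω = 0) /
                  pr P (fun ω => S ω = 1 ∧ Y ω = 0))) := by
  set q : Fin 2 → α → ℝ := fun s x =>
    pr P (fun ω => X ω = x ∧ S ω = s ∧ Y ω = 0) / pr P (fun ω => S ω = s ∧ Y ω = 0)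
  have hq_nonneg (s : Fin 2) (x : α) : 0 ≤ q s x := div_nonneg (pr_nonneg P hP0 _) (hSY s).le
  have hq_sum (s : Fin 2) : ∑ x, q s x = 1 := by
    rw [← sum_div, ← pr_eq_sum_pr_and_eq, div_self (hSY s).ne']
  have hp_eq_sum (s : Fin 2) : pr P (fun ω => c (X ω) = 1 ∧ S ω = s ∧ Y ω = 0) /
      pr P (fun ω => S ω = s ∧ Y ω = 0) = ∑ x ∈ univ.filter (c · = 1), q s x := by
    rw [pr_comp_and_eq_sum_filter P X (c · = 1), sum_div]
  have hdist := abs_sum_sub_sum_le_sqrt_two_mul_JS (univ.filter (c · = 1))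
    (hq_nonneg 0) (hq_nonneg 1) (hq_sum 0) (hq_sum 1)
  rw [← hp_eq_sum, ← hp_eq_sum] at hdist
  have hswap (s : Fin 2) : pr P (fun ω => S ω = s ∧ c (X ω) = 1 ∧ Y ω = 0) =
      pr P (fun ω => c (X ω) = 1 ∧ S ω = s ∧ Y ω = 0) := pr_congr P fun ω => and_left_comm
  rw [pr_eq_pr_and_eq_zero_add_pr_and_eq_one P S (fun ω => Y ω = 0),
    pr_eq_pr_and_eq_zero_add_pr_and_eq_one P S (fun ω => c (X ω) = 1 ∧ Y ω = 0), hswap, hswap]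
  refine (add_div_add_le_max_div (hSY 0) (hSY 1)).trans (max_le ?_ ?_)
  · linarith [(abs_le.mp hdist).2]
  · linarith [(abs_le.mp hdist).1]

/-- `FPR ≤ (p₀+p₁)/2 + ½·√(2·JS(q₀,q₁))`. -/
theorem stmt10 {Ω α : Type*} [Fintype Ω] [Fintype α]
    (P : Ω → ℝ) (hP0 : ∀ ω, 0 ≤ P ω) (hP1 : ∑ ω, P ω = 1)
    (S : Ω → Fin 2) (Y : Ω → Fin 2)
    (hSY : ∀ s, 0 < pr P (fun ω => S ω = s ∧ Y ω = 0))
    (X : Ω → α) (c : α → Fin 2) :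
    pr P (fun ω => c (X ω) = 1 ∧ Y ω = 0) / pr P (fun ω => Y ω = 0) ≤
      (pr P (fun ω => c (X ω) = 1 ∧ S ω = 0 ∧ Y ω = 0) /
            pr P (fun ω => S ω = 0 ∧ Y ω = 0)
          + pr P (fun ω => c (X ω) = 1 ∧ S ω = 1 ∧ Y ω = 0) /
            pr P (fun ω => S ω = 1 ∧ Y ω = 0)) / 2
        + 1 / 2 *
          Real.sqrt (2 *
            JS (fun x => pr P (fun ω => X ω = x ∧ S ω = 0 ∧ Y ω = 0) /
                  pr P (fun ω => S ω = 0 ∧ Y ω = 0))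
               (fun x => pr P (fun ω => X ω = x ∧ S ω = 1 ∧ Y ω = 0) /
                  pr P (fun ω => S ω = 1 ∧ Y ω = 0))) :=
  stmt10_general P hP0 S Y hSY X c
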